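/- arXiv:2506.18356 — 5 statements merged into one kernel-verified Lean document; each statement's English description precedes it below -/
import Mathlib

section
/- Let M and M̃ be n×n nonsingular M-matrices (off-diagonal entries nonpositive, inverses entrywise nonnegative) with M𝟏 ≥ 0 and M̃𝟏 ≥ 0 entrywise, where 𝟏 is the all-ones vector. Let 0 ≤ ε < 1 be such that for all i ≠ j, (1−ε)(−M_{ij}) ≤ −M̃_{ij} ≤ (1+ε)(−M_{ij}), and for all i, (1−ε)(M𝟏)_i ≤ (M̃𝟏)_i ≤ (1+ε)(M𝟏)_i. Then, entrywise, ((1−ε)^{n−1}/(1+ε)^n)·M⁻¹ ≤ M̃⁻¹ ≤ ((1+ε)^{n−1}/(1−ε)^n)·M⁻¹. -/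
/-!
Write each row of a Z-matrix `A` with nonnegative row sums as a nonnegative combination of
`eᵢ - eₖ` (coefficient `-Aᵢₖ`) and `eᵢ` (coefficient the row sum). By multilinearity, `det A` is
a sum over choices of one generator per row, with coefficient a product of one parameter per
row, times the determinant of a matrix of the same kind, which is nonnegative. Perturbing every
parameter by a factor in `[1 - ε, 1 + ε]` thus moves `det A` by a factor in
`[(1 - ε)ⁿ, (1 + ε)ⁿ]`. The entry `adj(A) i j` is the determinant with row `j` replaced by `eᵢ`,
so it has only `n - 1` parameter rows; dividing by the determinant bounds `A⁻¹`.

Nonnegativity of these determinants and adjugates follows from the minimum principle for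
Z-matrices with positive row sums, and a limit `A + t • 1 → A`.
-/

open Matrix Finset Filter Topology

def WithinFactors (l u x y : ℝ) : Prop :=
  l * x ≤ y ∧ y ≤ u * x

namespace WithinFactors

variable {l u l' u' x y x' y' : ℝ}

theorem nonneg (h : WithinFactors l u x y) (hl : 0 ≤ l) (hx : 0 ≤ x) : 0 ≤ y :=
  (mul_nonneg hl hx).trans h.1

theorem add (h : WithinFactors l u x y) (h' : WithinFactors l u x' y') :
    WithinFactors l u (x + x') (y + y') :=
  ⟨by linarith [h.1, h'.1], by linarith [h.2, h'.2]⟩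

theorem sum {κ : Type*} (s : Finset κ) {f g : κ → ℝ}
    (h : ∀ k ∈ s, WithinFactors l u (f k) (g k)) :
    WithinFactors l u (∑ k ∈ s, f k) (∑ k ∈ s, g k) := by
  constructor <;> rw [Finset.mul_sum] <;> exact Finset.sum_le_sum fun k hk => by
    first | exact (h k hk).1 | exact (h k hk).2

theorem mul (h : WithinFactors l u x y) (h' : WithinFactors l' u' x' y')
    (hl : 0 ≤ l) (hl' : 0 ≤ l') (hx : 0 ≤ x) (hx' : 0 ≤ x') :
    WithinFactors (l * l') (u * u') (x * x') (y * y') := by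
  have hy' := h'.nonneg hl' hx'
  constructor
  · calc l * l' * (x * x') = (l * x) * (l' * x') := by ring
      _ ≤ y * y' := mul_le_mul h.1 h'.1 (mul_nonneg hl' hx') (h.nonneg hl hx)
  · calc y * y' ≤ (u * x) * (u' * x') :=
          mul_le_mul h.2 h'.2 hy' ((h.nonneg hl hx).trans h.2)
      _ = u * u' * (x * x') := by ring

theorem div (h : WithinFactors l u x y) (h' : WithinFactors l' u' x' y')
    (hl : 0 ≤ l) (hl' : 0 < l') (hx : 0 ≤ x) (hx' : 0 < x') :
    WithinFactors (l / u') (u / l') (x / x') (y / y') := by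
  have hy' : 0 < y' := (mul_pos hl' hx').trans_le h'.1
  constructor
  · rw [div_mul_div_comm]
    exact div_le_div₀ (h.nonneg hl hx) h.1 hy' h'.2
  · rw [div_mul_div_comm]
    exact div_le_div₀ ((h.nonneg hl hx).trans h.2) h.2 (mul_pos hl' hx') h'.1

end WithinFactors

theorem nonneg_of_forall_pos_nonneg_add_smul_one {ι : Type*} [DecidableEq ι]
    {f : Matrix ι ι ℝ → ℝ} (hf : Continuous f) (A : Matrix ι ι ℝ)
    (h : ∀ t : ℝ, 0 < t → 0 ≤ f (A + t • 1)) : 0 ≤ f A := by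
  have hlim : Tendsto (fun t : ℝ => f (A + t • 1)) (𝓝[>] 0) (𝓝 (f A)) := by
    have hc : Continuous fun t : ℝ => f (A + t • 1) := hf.comp (by fun_prop)
    simpa using (hc.tendsto 0).mono_left nhdsWithin_le_nhds
  exact ge_of_tendsto hlim (eventually_nhdsWithin_of_forall h)

section

variable {ι : Type*} [Fintype ι]

/-- With nonpositive off-diagonal entries, a nonnegative row sum is weak diagonal dominance. -/
def IsDiagDominantZRow (i : ι) (v : ι → ℝ) : Prop :=
  (∀ k, i ≠ k → v k ≤ 0) ∧ 0 ≤ ∑ k, v k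

/-- At a minimum `x r` of `x`, `(B x) r ≤ x r * ∑ⱼ B r j`, which is negative if `x r` is. -/
theorem nonneg_of_mulVec_nonneg {B : Matrix ι ι ℝ} (hoff : ∀ i j, i ≠ j → B i j ≤ 0)
    (hsum : ∀ i, 0 < ∑ j, B i j) {x : ι → ℝ} (hx : 0 ≤ B *ᵥ x) : 0 ≤ x := by
  intro i
  have : Nonempty ι := ⟨i⟩
  obtain ⟨r, hr⟩ := Finite.exists_min x
  by_contra! hneg
  have hxr : x r < 0 := (hr i).trans_lt hneg
  have hmin : (B *ᵥ x) r ≤ x r * ∑ j, B r j := by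
    rw [Finset.mul_sum, mulVec, dotProduct]
    refine Finset.sum_le_sum fun j _ => ?_
    rcases eq_or_ne r j with rfl | hrj
    · rw [mul_comm]
    · nlinarith [hoff r j hrj, hr j]
  linarith [show 0 ≤ (B *ᵥ x) r from hx r, mul_neg_of_neg_of_pos hxr (hsum r)]

variable [DecidableEq ι]

theorem isDiagDominantZRow_single (i : ι) : IsDiagDominantZRow i (Pi.single i 1) :=
  ⟨fun k hik => by simp [Ne.symm hik], by simp⟩

theorem isDiagDominantZRow_single_sub_single (i k : ι) :
    IsDiagDominantZRow i (Pi.single i 1 - Pi.single k 1) :=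
  ⟨fun m him => by simp [Pi.single_apply, Ne.symm him]; split_ifs <;> norm_num,
    by simp [Finset.sum_sub_distrib]⟩

theorem det_ne_zero_of_rowSum_pos {B : Matrix ι ι ℝ} (hoff : ∀ i j, i ≠ j → B i j ≤ 0)
    (hsum : ∀ i, 0 < ∑ j, B i j) : B.det ≠ 0 := by
  intro hdet
  obtain ⟨x, hx0, hBx⟩ := exists_mulVec_eq_zero_iff.mpr hdet
  refine hx0 (le_antisymm ?_ (nonneg_of_mulVec_nonneg hoff hsum hBx.ge))
  simpa using nonneg_of_mulVec_nonneg hoff hsum (x := -x) (by simp [mulVec_neg, hBx])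

/-- The segment from `1` to `B` stays in the class, so its determinant never vanishes. -/
theorem det_pos_of_rowSum_pos {B : Matrix ι ι ℝ} (hoff : ∀ i j, i ≠ j → B i j ≤ 0)
    (hsum : ∀ i, 0 < ∑ j, B i j) : 0 < B.det := by
  set C : ℝ → Matrix ι ι ℝ := fun s => (1 - s) • (1 : Matrix ι ι ℝ) + s • B
  have hC : ∀ s ∈ Set.Icc (0 : ℝ) 1, (C s).det ≠ 0 := by
    rintro s ⟨hs0, hs1⟩
    refine det_ne_zero_of_rowSum_pos (fun i j hij => ?_) fun i => ?_
    · simp [C, one_apply_ne hij, mul_nonpos_of_nonneg_of_nonpos hs0 (hoff i j hij)]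
    · have hCsum : ∑ j, C s i j = (1 - s) + s * ∑ j, B i j := by
        simp [C, Finset.sum_add_distrib, Finset.mul_sum, one_apply]
      rcases hs0.eq_or_lt with rfl | hs0
      · simp [hCsum]
      · nlinarith [hsum i, hs1]
  by_contra! hB
  obtain ⟨s, hs, hs0⟩ := intermediate_value_Icc' zero_le_one
    (f := fun s => (C s).det) (by fun_prop) ⟨by simpa [C] using hB, by simp [C]⟩
  exact hC s hs hs0

theorem adjugate_nonneg_of_rowSum_pos {B : Matrix ι ι ℝ} (hoff : ∀ i j, i ≠ j → B i j ≤ 0)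
    (hsum : ∀ i, 0 < ∑ j, B i j) (i j : ι) : 0 ≤ B.adjugate i j := by
  have hcol : 0 ≤ B *ᵥ fun k => B.adjugate k j := by
    intro r
    have hr : (B *ᵥ fun k => B.adjugate k j) r = (B * B.adjugate) r j := by
      simp [mulVec, dotProduct, mul_apply]
    rw [hr, mul_adjugate, Matrix.smul_apply, one_apply]
    split_ifs <;> simp [(det_pos_of_rowSum_pos hoff hsum).le]
  exact nonneg_of_mulVec_nonneg hoff hsum hcol i

theorem rowSum_pos_add_smul_one {A : Matrix ι ι ℝ} (hA : ∀ i, IsDiagDominantZRow i (A i))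
    {t : ℝ} (ht : 0 < t) :
    (∀ i j, i ≠ j → (A + t • 1) i j ≤ 0) ∧ ∀ i, 0 < ∑ j, (A + t • 1) i j := by
  refine ⟨fun i j hij => by simpa [one_apply_ne hij] using (hA i).1 j hij, fun i => ?_⟩
  simp only [Matrix.add_apply, Matrix.smul_apply, one_apply, smul_eq_mul, mul_ite, mul_one,
    mul_zero, Finset.sum_add_distrib, Finset.sum_ite_eq, Finset.mem_univ, if_true]
  linarith [(hA i).2]

theorem det_nonneg_of_isDiagDominantZRow {A : Matrix ι ι ℝ}
    (hA : ∀ i, IsDiagDominantZRow i (A i)) : 0 ≤ A.det :=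
  nonneg_of_forall_pos_nonneg_add_smul_one (by fun_prop) A fun _ ht =>
    (det_pos_of_rowSum_pos (rowSum_pos_add_smul_one hA ht).1
      (rowSum_pos_add_smul_one hA ht).2).le

theorem adjugate_nonneg_of_isDiagDominantZRow {A : Matrix ι ι ℝ}
    (hA : ∀ i, IsDiagDominantZRow i (A i)) (i j : ι) : 0 ≤ A.adjugate i j :=
  nonneg_of_forall_pos_nonneg_add_smul_one (f := fun B => B.adjugate i j) (by fun_prop) A
    fun _ ht => adjugate_nonneg_of_rowSum_pos (rowSum_pos_add_smul_one hA ht).1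
      (rowSum_pos_add_smul_one hA ht).2 i j

theorem det_eq_sum_updateRow (A : Matrix ι ι ℝ) (i : ι) :
    A.det = ∑ k, -A i k * (A.updateRow i (Pi.single i 1 - Pi.single k 1)).det +
      (∑ k, A i k) * (A.updateRow i (Pi.single i 1)).det := by
  obtain ⟨L, hL⟩ : ∃ L : (ι → ℝ) →ₗ[ℝ] ℝ, ∀ v, L v = (A.updateRow i v).det :=
    ⟨detRowAlternating.toMultilinearMap.toLinearMap A i, fun _ => rfl⟩
  have hrow : A i = ∑ k, (-A i k) • (Pi.single i 1 - Pi.single k 1) +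
      (∑ k, A i k) • Pi.single i 1 := by
    ext c
    simp [Pi.single_apply, mul_sub, Finset.sum_sub_distrib]
  have hdet : A.det = L (A i) := by rw [hL, updateRow_eq_self]
  rw [hdet, congrArg L hrow, map_add, map_sum]
  simp_rw [map_smul, smul_eq_mul, hL]

/-- Rows outside `S` are arbitrary (for the adjugate, one of them is `eᵢ`), so the signs of the
determinants met in the expansion are a hypothesis. -/
theorem withinFactors_det_of_rows {l u : ℝ} (hl : 0 ≤ l) (S : Finset ι) (A B : Matrix ι ι ℝ)
    (hout : ∀ r ∉ S, B r = A r) (hA : ∀ r ∈ S, IsDiagDominantZRow r (A r))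
    (hoff : ∀ r ∈ S, ∀ k, r ≠ k → WithinFactors l u (-A r k) (-B r k))
    (hsum : ∀ r ∈ S, WithinFactors l u (∑ k, A r k) (∑ k, B r k))
    (hnonneg : ∀ C : Matrix ι ι ℝ, (∀ r ∉ S, C r = A r) →
      (∀ r ∈ S, IsDiagDominantZRow r (C r)) → 0 ≤ C.det) :
    WithinFactors (l ^ #S) (u ^ #S) A.det B.det := by
  induction S using Finset.induction_on generalizing A B with
  | empty =>
    obtain rfl : B = A := funext fun r => hout r (Finset.notMem_empty r)
    exact ⟨by simp, by simp⟩
  | @insert i S hi IH =>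
    have hrest : ∀ r ∈ S, r ≠ i := fun r hr hri => hi (hri ▸ hr)
    have hgen : ∀ v, IsDiagDominantZRow i v → 0 ≤ (A.updateRow i v).det ∧
        WithinFactors (l ^ #S) (u ^ #S) (A.updateRow i v).det (B.updateRow i v).det := by
      intro v hv
      have hnonneg' : ∀ C : Matrix ι ι ℝ, (∀ r ∉ S, C r = A.updateRow i v r) →
          (∀ r ∈ S, IsDiagDominantZRow r (C r)) → 0 ≤ C.det := by
        intro C hCout hCS
        refine hnonneg C (fun r hr => ?_) fun r hr => ?_
        · have hri : r ≠ i := fun h => hr (h ▸ mem_insert_self i S)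
          rw [hCout r fun h => hr (mem_insert_of_mem h), updateRow_ne hri]
        · rcases mem_insert.mp hr with rfl | hr
          · simpa [hCout r hi] using hv
          · exact hCS r hr
      refine ⟨hnonneg' _ (fun _ _ => rfl) fun r hr => ?_,
        IH _ _ (fun r hr => ?_) (fun r hr => ?_) (fun r hr => ?_) (fun r hr => ?_) hnonneg'⟩
      · simpa [updateRow_ne (hrest r hr)] using hA r (mem_insert_of_mem hr)
      · rcases eq_or_ne r i with rfl | hri
        · simp
        · simp [updateRow_ne hri, hout r (by simp [hri, hr])]
      · simpa [updateRow_ne (hrest r hr)] using hA r (mem_insert_of_mem hr)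
      · simpa [updateRow_ne (hrest r hr)] using hoff r (mem_insert_of_mem hr)
      · simpa [updateRow_ne (hrest r hr)] using hsum r (mem_insert_of_mem hr)
    have hAi := hA i (mem_insert_self i S)
    rw [det_eq_sum_updateRow A i, det_eq_sum_updateRow B i, card_insert_of_notMem hi,
      pow_succ', pow_succ']
    refine .add (.sum _ fun k _ => ?_) ?_
    · rcases eq_or_ne i k with rfl | hik
      · simp [WithinFactors, det_eq_zero_of_row_eq_zero i]
      · obtain ⟨hdet, hk⟩ := hgen _ (isDiagDominantZRow_single_sub_single i k)
        exact (hoff i (mem_insert_self i S) k hik).mul hk hl (pow_nonneg hl _)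
          (neg_nonneg.mpr (hAi.1 k hik)) hdet
    · obtain ⟨hdet, hk⟩ := hgen _ (isDiagDominantZRow_single i)
      exact (hsum i (mem_insert_self i S)).mul hk hl (pow_nonneg hl _) hAi.2 hdet

variable {l u : ℝ} {A B : Matrix ι ι ℝ}

theorem withinFactors_det (hl : 0 ≤ l) (hA : ∀ r, IsDiagDominantZRow r (A r))
    (hoff : ∀ r k, r ≠ k → WithinFactors l u (-A r k) (-B r k))
    (hsum : ∀ r, WithinFactors l u (∑ k, A r k) (∑ k, B r k)) :
    WithinFactors (l ^ Fintype.card ι) (u ^ Fintype.card ι) A.det B.det := by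
  simpa using withinFactors_det_of_rows hl univ A B (by simp) (fun r _ => hA r)
    (fun r _ => hoff r) (fun r _ => hsum r)
    fun C _ hC => det_nonneg_of_isDiagDominantZRow fun r => hC r (mem_univ r)

theorem withinFactors_adjugate (hl : 0 ≤ l) (hA : ∀ r, IsDiagDominantZRow r (A r))
    (hoff : ∀ r k, r ≠ k → WithinFactors l u (-A r k) (-B r k))
    (hsum : ∀ r, WithinFactors l u (∑ k, A r k) (∑ k, B r k)) (i j : ι) :
    WithinFactors (l ^ (Fintype.card ι - 1)) (u ^ (Fintype.card ι - 1))
      (A.adjugate i j) (B.adjugate i j) := by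
  have hnonneg : ∀ C : Matrix ι ι ℝ, C j = Pi.single i 1 →
      (∀ r ∈ univ.erase j, IsDiagDominantZRow r (C r)) → 0 ≤ C.det := by
    intro C hCj hC
    have hdet : C.det = (C.updateRow j (Pi.single j 1)).adjugate i j := by
      rw [adjugate_apply, updateRow_idem, ← hCj, updateRow_eq_self]
    rw [hdet]
    refine adjugate_nonneg_of_isDiagDominantZRow (fun r => ?_) i j
    rcases eq_or_ne r j with rfl | hrj
    · simpa using isDiagDominantZRow_single r
    · simpa [updateRow_ne hrj] using hC r (mem_erase.mpr ⟨hrj, mem_univ r⟩)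
  have hrow : ∀ r ∈ univ.erase j, r ≠ j := fun r hr => (mem_erase.mp hr).1
  have hbound := withinFactors_det_of_rows hl (univ.erase j) (A.updateRow j (Pi.single i 1))
    (B.updateRow j (Pi.single i 1)) (fun r hr => ?_)
    (fun r hr => by simpa [updateRow_ne (hrow r hr)] using hA r)
    (fun r hr => by simpa [updateRow_ne (hrow r hr)] using hoff r)
    (fun r hr => by simpa [updateRow_ne (hrow r hr)] using hsum r)
    fun C hCout hC => hnonneg C (by simpa using hCout j (by simp)) hC
  · simpa [adjugate_apply, card_erase_of_mem] using hbound
  · obtain rfl : r = j := by simpa using hr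
    simp

end

theorem mmatrix_inverse_componentwise_bound_general
    {n : ℕ} (M Mt : Matrix (Fin n) (Fin n) ℝ) (ε : ℝ)
    (hMoff : ∀ i j, i ≠ j → M i j ≤ 0)
    (hMdet : IsUnit M.det)
    (hMrow : ∀ i, 0 ≤ ∑ j, M i j)
    (hε1 : ε < 1)
    (hoff : ∀ i j, i ≠ j →
      (1 - ε) * (-(M i j)) ≤ -(Mt i j) ∧ -(Mt i j) ≤ (1 + ε) * (-(M i j)))
    (hrow : ∀ i, (1 - ε) * (∑ j, M i j) ≤ (∑ j, Mt i j) ∧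
      (∑ j, Mt i j) ≤ (1 + ε) * (∑ j, M i j)) :
    ∀ i j, ((1 - ε) ^ (n - 1) / (1 + ε) ^ n) * M⁻¹ i j ≤ Mt⁻¹ i j ∧
      Mt⁻¹ i j ≤ ((1 + ε) ^ (n - 1) / (1 - ε) ^ n) * M⁻¹ i j := by
  intro i j
  have hM : ∀ r, IsDiagDominantZRow r (M r) := fun r => ⟨hMoff r, hMrow r⟩
  have hl : 0 < 1 - ε := sub_pos.mpr hε1
  have hdet := withinFactors_det hl.le hM hoff hrow
  have hadj := withinFactors_adjugate hl.le hM hoff hrow i j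
  rw [Fintype.card_fin] at hdet hadj
  have hMpos : 0 < M.det :=
    (det_nonneg_of_isDiagDominantZRow hM).lt_of_ne' hMdet.ne_zero
  have hinv : ∀ A : Matrix (Fin n) (Fin n) ℝ, A⁻¹ i j = A.adjugate i j / A.det := fun A => by
    simp [Matrix.inv_def, div_eq_inv_mul]
  rw [hinv, hinv]
  exact hadj.div hdet (pow_nonneg hl.le _) (pow_pos hl _)
    (adjugate_nonneg_of_isDiagDominantZRow hM i j) hMpos

/-- Componentwise perturbation bound for inverses of nonsingular M-matrices
(Theorem `MMt` in the paper, due to O'Cinneide / Alfa–Xue–Ye). -/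
theorem mmatrix_inverse_componentwise_bound
    {n : ℕ} (M Mt : Matrix (Fin n) (Fin n) ℝ) (ε : ℝ)
    (hMoff : ∀ i j, i ≠ j → M i j ≤ 0)
    (hMtoff : ∀ i j, i ≠ j → Mt i j ≤ 0)
    (hMdet : IsUnit M.det) (hMtdet : IsUnit Mt.det)
    (hMinv : ∀ i j, 0 ≤ M⁻¹ i j) (hMtinv : ∀ i j, 0 ≤ Mt⁻¹ i j)
    (hMrow : ∀ i, 0 ≤ ∑ j, M i j) (hMtrow : ∀ i, 0 ≤ ∑ j, Mt i j)
    (hε0 : 0 ≤ ε) (hε1 : ε < 1)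
    (hoff : ∀ i j, i ≠ j →
      (1 - ε) * (-(M i j)) ≤ -(Mt i j) ∧ -(Mt i j) ≤ (1 + ε) * (-(M i j)))
    (hrow : ∀ i, (1 - ε) * (∑ j, M i j) ≤ (∑ j, Mt i j) ∧
      (∑ j, Mt i j) ≤ (1 + ε) * (∑ j, M i j)) :
    ∀ i j, ((1 - ε) ^ (n - 1) / (1 + ε) ^ n) * M⁻¹ i j ≤ Mt⁻¹ i j ∧
      Mt⁻¹ i j ≤ ((1 + ε) ^ (n - 1) / (1 - ε) ^ n) * M⁻¹ i j :=
  mmatrix_inverse_componentwise_bound_general M Mt ε hMoff hMdet hMrow hε1 hoff hrow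
end

section
/- Let M and M̃ be n×n nonsingular M-matrices with M𝟏 ≥ 0 and M̃𝟏 ≥ 0 entrywise, and let 0 ≤ ε < 1 satisfy: for all i ≠ j, (1−ε)(−M_{ij}) ≤ −M̃_{ij} ≤ (1+ε)(−M_{ij}), and for all i, (1−ε)(M𝟏)_i ≤ (M̃𝟏)_i ≤ (1+ε)(M𝟏)_i. Then (1−ε)^n · det M ≤ det M̃ ≤ (1+ε)^n · det M. -/
/-!
Row `i` of a square matrix `N` is `(∑ k, N i k) • eᵢ + ∑_{j ≠ i} (-N i j) • (eᵢ - eⱼ)`. Expanding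
the determinant multilinearly in the rows gives `det N = ∑_g (∏ i, w i (g i)) * det E_g`, where the
weights `w` are the row sums and the negated off-diagonal entries, and `E_g` has rows `eᵢ` or
`eᵢ - e_{g i}`. Each `E_g` is weakly diagonally dominant with unit diagonal, so `det E_g ≥ 0`.
Hence, on matrices with nonpositive off-diagonal entries and nonnegative row sums, the determinant
is monotone in the weights, and the hypotheses say that the weights of `M̃` lie between `1 - ε` and
`1 + ε` times those of `M`.
-/

open Matrix Finset

variable {n R : Type*} [DecidableEq n]

namespace Matrix

section CommRing

variable [CommRing R]

def arcRow (i j : n) : n → R :=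
  fun k => (if k = i then 1 else 0) - (if j ≠ i ∧ k = j then 1 else 0)

def arcMatrix (g : n → n) : Matrix n n R :=
  of fun i => arcRow i (g i)

theorem arcRow_apply_self (i j : n) : arcRow (R := R) i j i = 1 := by
  simp +contextual [arcRow, eq_comm]

theorem arcRow_apply_of_ne {i k : n} (hk : k ≠ i) (j : n) :
    arcRow (R := R) i j k = -(if k = j then 1 else 0) := by
  by_cases hj : k = j
  · subst hj
    simp [arcRow, hk]
  · simp [arcRow, hk, hj]

variable [Fintype n]

def arcWeight (N : Matrix n n R) (i j : n) : R :=
  if j = i then ∑ k, N i k else -N i j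

theorem sum_arcWeight (N : Matrix n n R) (i : n) : ∑ j, arcWeight N i j = N i i := by
  simp only [arcWeight, sum_ite, filter_eq', filter_ne', mem_univ, if_true, sum_singleton,
    sum_neg_distrib, sum_erase_eq_sub (mem_univ i)]
  ring

theorem sum_arcWeight_smul_arcRow (N : Matrix n n R) (i : n) :
    ∑ j, arcWeight N i j • arcRow i j = N i := by
  ext k
  rw [Finset.sum_apply]
  by_cases hk : k = i
  · subst hk
    simp [arcRow_apply_self, sum_arcWeight]
  · simp [arcRow_apply_of_ne hk, arcWeight, hk]

theorem det_eq_sum_prod_arcWeight_mul_det_arcMatrix (N : Matrix n n R) :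
    N.det = ∑ g : n → n, (∏ i, arcWeight N i (g i)) * (arcMatrix g : Matrix n n R).det := by
  calc N.det = detRowAlternating fun i => ∑ j, arcWeight N i j • arcRow i j := by
        simp_rw [sum_arcWeight_smul_arcRow]
        rfl
    _ = ∑ g : n → n, detRowAlternating fun i => arcWeight N i (g i) • arcRow i (g i) :=
        (detRowAlternating (R := R) (n := n)).toMultilinearMap.map_sum _
    _ = _ := sum_congr rfl fun g _ => by
        rw [AlternatingMap.map_smul_univ]
        rfl

theorem arcWeight_smul (c : R) (N : Matrix n n R) (i j : n) :
    arcWeight (c • N) i j = c * arcWeight N i j := by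
  simp only [arcWeight, smul_apply, smul_eq_mul, ← mul_sum]
  split_ifs <;> ring

end CommRing

variable [Fintype n]

theorem det_nonneg_of_sum_row_le_diag {A : Matrix n n ℝ}
    (h : ∀ k, ∑ j ∈ univ.erase k, |A k j| ≤ A k k) : 0 ≤ A.det := by
  -- `s • A + (1 - s) • 1` is strictly diagonally dominant for `0 ≤ s < 1`.
  set f : ℝ → ℝ := fun s => (s • A + (1 - s) • (1 : Matrix n n ℝ)).det
  have hf : Continuous f := by fun_prop
  have hf_ne : ∀ s ∈ Set.Ico (0 : ℝ) 1, f s ≠ 0 := by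
    rintro s ⟨hs0, hs1⟩
    refine det_ne_zero_of_sum_row_lt_diag fun k => ?_
    have hoff : ∀ j ∈ univ.erase k,
        ‖(s • A + (1 - s) • (1 : Matrix n n ℝ)) k j‖ = s * |A k j| := fun j hj => by
      simp [one_apply_ne' (ne_of_mem_erase hj), abs_of_nonneg hs0]
    have hAkk : 0 ≤ A k k := (sum_nonneg fun j _ => abs_nonneg _).trans (h k)
    rw [sum_congr rfl hoff, ← mul_sum]
    simp only [add_apply, smul_apply, one_apply_eq, smul_eq_mul, mul_one, Real.norm_eq_abs]
    rw [abs_of_pos (by nlinarith)]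
    nlinarith [h k]
  have hf_pos : ∀ s ∈ Set.Ico (0 : ℝ) 1, 0 < f s := by
    intro s hs
    by_contra! hle
    obtain ⟨t, ht, hft⟩ := isPreconnected_Ico.intermediate_value hs ⟨le_rfl, one_pos⟩
      hf.continuousOn ⟨hle, by simp [f]⟩
    exact hf_ne t ht hft
  have h1 : (1 : ℝ) ∈ closure (Set.Ico 0 1) := by simp [closure_Ico]
  simpa [f] using (isClosed_le continuous_const hf).closure_subset_iff.mpr
    (fun s hs => (hf_pos s hs).le) h1

theorem det_arcMatrix_nonneg (g : n → n) : 0 ≤ (arcMatrix g : Matrix n n ℝ).det := by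
  refine det_nonneg_of_sum_row_le_diag fun i => ?_
  have hoff : ∀ j ∈ univ.erase i, |arcRow (R := ℝ) i (g i) j| = if j = g i then 1 else 0 :=
    fun j hj => by
      simp [arcRow_apply_of_ne (ne_of_mem_erase hj), apply_ite, eq_comm]
  simp only [arcMatrix, of_apply, arcRow_apply_self, sum_congr rfl hoff, sum_ite_eq']
  split_ifs <;> norm_num

theorem arcWeight_nonneg {N : Matrix n n ℝ} (hoff : ∀ i j, i ≠ j → N i j ≤ 0)
    (hrow : ∀ i, 0 ≤ ∑ j, N i j) (i j : n) : 0 ≤ arcWeight N i j := by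
  unfold arcWeight
  split_ifs with h
  · exact hrow i
  · exact neg_nonneg.mpr (hoff i j (Ne.symm h))

theorem det_le_det_of_arcWeight_le {A B : Matrix n n ℝ} (hA : ∀ i j, 0 ≤ arcWeight A i j)
    (hAB : ∀ i j, arcWeight A i j ≤ arcWeight B i j) : A.det ≤ B.det := by
  rw [det_eq_sum_prod_arcWeight_mul_det_arcMatrix A, det_eq_sum_prod_arcWeight_mul_det_arcMatrix B]
  exact sum_le_sum fun g _ => mul_le_mul_of_nonneg_right
    (prod_le_prod (fun i _ => hA i (g i)) fun i _ => hAB i (g i)) (det_arcMatrix_nonneg g)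

end Matrix

theorem mmatrix_det_componentwise_bound_general
    {n : ℕ} (M Mt : Matrix (Fin n) (Fin n) ℝ) (ε : ℝ)
    (hMoff : ∀ i j, i ≠ j → M i j ≤ 0)
    (hMtoff : ∀ i j, i ≠ j → Mt i j ≤ 0)
    (hMrow : ∀ i, 0 ≤ ∑ j, M i j) (hMtrow : ∀ i, 0 ≤ ∑ j, Mt i j)
    (hε1 : ε < 1)
    (hoff : ∀ i j, i ≠ j →
      (1 - ε) * (-(M i j)) ≤ -(Mt i j) ∧ -(Mt i j) ≤ (1 + ε) * (-(M i j)))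
    (hrow : ∀ i, (1 - ε) * (∑ j, M i j) ≤ (∑ j, Mt i j) ∧
      (∑ j, Mt i j) ≤ (1 + ε) * (∑ j, M i j)) :
    (1 - ε) ^ n * M.det ≤ Mt.det ∧ Mt.det ≤ (1 + ε) ^ n * M.det := by
  have hw : ∀ i j, (1 - ε) * arcWeight M i j ≤ arcWeight Mt i j ∧
      arcWeight Mt i j ≤ (1 + ε) * arcWeight M i j := by
    intro i j
    unfold arcWeight
    split_ifs with h
    · exact hrow i
    · exact hoff i j (Ne.symm h)
  have hM := arcWeight_nonneg hMoff hMrow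
  have hMt := arcWeight_nonneg hMtoff hMtrow
  constructor
  · have h := det_le_det_of_arcWeight_le (A := (1 - ε) • M) (B := Mt)
      (fun i j => (arcWeight_smul _ M i j).symm ▸ mul_nonneg (by linarith) (hM i j))
      (fun i j => (arcWeight_smul _ M i j).symm ▸ (hw i j).1)
    simpa [det_smul] using h
  · have h := det_le_det_of_arcWeight_le (A := Mt) (B := (1 + ε) • M) hMt
      (fun i j => (arcWeight_smul _ M i j).symm ▸ (hw i j).2)
    simpa [det_smul] using h

/-- Bound on the determinant of a componentwise-perturbed nonsingular M-matrix. -/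
theorem mmatrix_det_componentwise_bound
    {n : ℕ} (M Mt : Matrix (Fin n) (Fin n) ℝ) (ε : ℝ)
    (hMoff : ∀ i j, i ≠ j → M i j ≤ 0)
    (hMtoff : ∀ i j, i ≠ j → Mt i j ≤ 0)
    (hMdet : IsUnit M.det) (hMtdet : IsUnit Mt.det)
    (hMinv : ∀ i j, 0 ≤ M⁻¹ i j) (hMtinv : ∀ i j, 0 ≤ Mt⁻¹ i j)
    (hMrow : ∀ i, 0 ≤ ∑ j, M i j) (hMtrow : ∀ i, 0 ≤ ∑ j, Mt i j)
    (hε0 : 0 ≤ ε) (hε1 : ε < 1)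
    (hoff : ∀ i j, i ≠ j →
      (1 - ε) * (-(M i j)) ≤ -(Mt i j) ∧ -(Mt i j) ≤ (1 + ε) * (-(M i j)))
    (hrow : ∀ i, (1 - ε) * (∑ j, M i j) ≤ (∑ j, Mt i j) ∧
      (∑ j, Mt i j) ≤ (1 + ε) * (∑ j, M i j)) :
    (1 - ε) ^ n * M.det ≤ Mt.det ∧ Mt.det ≤ (1 + ε) ^ n * M.det :=
  mmatrix_det_componentwise_bound_general M Mt ε hMoff hMtoff hMrow hMtrow hε1 hoff hrow
end

section
/- Let M and M̃ be n×n nonsingular M-matrices with M𝟏 ≥ 0 and M̃𝟏 ≥ 0 entrywise, and let 0 ≤ ε < 1 satisfy: for all i ≠ j, (1−ε)(−M_{ij}) ≤ −M̃_{ij} ≤ (1+ε)(−M_{ij}), and for all i, (1−ε)(M𝟏)_i ≤ (M̃𝟏)_i ≤ (1+ε)(M𝟏)_i. Then, entrywise, (1−ε)^{n−1} · adj(M) ≤ adj(M̃) ≤ (1+ε)^{n−1} · adj(M), where adj denotes the adjugate matrix. -/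
/-!
Call a matrix with nonpositive off-diagonal entries and nonnegative row sums a diagonally dominant
Z-matrix. The hypotheses say that `M̃` dominates `(1 - ε) M`, and `(1 + ε) M` dominates `M̃`, in
the sense of smaller off-diagonal entries and larger row sums. As `adj (c M) = c ^ (n - 1) adj M`,
it suffices that the adjugate of a diagonally dominant Z-matrix is entrywise monotone under
domination.

Change one row `k` at a time. For `j ≠ k`, `adj(A) i j = det (A with row j replaced by e_i)` is
affine in row `k`, and the increment `v` of that row has `v l ≤ 0` for `l ≠ k` and `∑ v ≥ 0`, so
`v = (∑ v) e_k + ∑ l, (-v l) (e_k - e_l)` is a nonnegative combination of `e_k` and the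
`e_k - e_l`. Putting `e_k` in row `k` leaves the principal minor at `k`; putting `e_k - e_l` there
leaves, after adding column `k` to column `l`, the principal minor of the matrix with columns `k`
and `l` merged. Both are again diagonally dominant Z-matrices with one row replaced by a
nonnegative vector, so induction on the size shows that all these determinants are nonnegative.
-/

namespace Matrix

theorem submatrix_updateRow_of_injective {α l m n o : Type*} [DecidableEq l] [DecidableEq m]
    (A : Matrix m o α) {f : l → m} (hf : Function.Injective f) (g : n → o) (i : l) (u : o → α) :
    (A.updateRow (f i) u).submatrix f g = (A.submatrix f g).updateRow i (u ∘ g) := by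
  ext x y
  by_cases hx : x = i
  · subst hx
    simp
  · simp [updateRow_apply, hf.ne_iff, hx]

variable {R : Type*} [CommRing R]

theorem det_updateRow_finset_sum {n : Type*} [Fintype n] [DecidableEq n] (X : Matrix n n R)
    (k : n) {ι : Type*} (s : Finset ι) (f : ι → n → R) :
    (X.updateRow k (∑ l ∈ s, f l)).det = ∑ l ∈ s, (X.updateRow k (f l)).det :=
  map_sum (detRowAlternating.toMultilinearMap.toLinearMap X k) f s

theorem det_updateRow_single_self {m : ℕ} (X : Matrix (Fin (m + 1)) (Fin (m + 1)) R)
    (k : Fin (m + 1)) :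
    (X.updateRow k (Pi.single k 1)).det = (X.submatrix k.succAbove k.succAbove).det := by
  simp [det_succ_row _ k, submatrix_updateRow_succAbove, Pi.single_apply]

theorem det_updateRow_single_sub_single {m : ℕ} (X : Matrix (Fin (m + 1)) (Fin (m + 1)) R)
    {k l : Fin (m + 1)} (hlk : l ≠ k) :
    (X.updateRow k (Pi.single k 1 - Pi.single l 1)).det =
      ((X.updateCol l fun r => X r l + X r k).submatrix k.succAbove k.succAbove).det := by
  rw [← det_updateCol_add_smul_self _ hlk 1, ← det_updateRow_single_self]
  congr 1
  ext r c
  by_cases hr : r = k <;> by_cases hc : c = l <;>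
    simp [updateRow_apply, Pi.single_apply, hr, hc, hlk, hlk.symm]

variable [LinearOrder R]

structure IsDiagDominantZMatrix {n : Type*} [Fintype n] (A : Matrix n n R) : Prop where
  offDiag_nonpos : ∀ i j, i ≠ j → A i j ≤ 0
  rowSum_nonneg : ∀ i, 0 ≤ ∑ j, A i j

theorem IsDiagDominantZMatrix.of_forall_row_eq_or {n : Type*} [Fintype n] {A B C : Matrix n n R}
    (hA : A.IsDiagDominantZMatrix) (hB : B.IsDiagDominantZMatrix)
    (hC : ∀ x, C x = A x ∨ C x = B x) : C.IsDiagDominantZMatrix where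
  offDiag_nonpos x y hxy := by
    rcases hC x with h | h <;> rw [h]
    exacts [hA.offDiag_nonpos x y hxy, hB.offDiag_nonpos x y hxy]
  rowSum_nonneg x := by
    rcases hC x with h | h <;> rw [h]
    exacts [hA.rowSum_nonneg x, hB.rowSum_nonneg x]

variable [IsStrictOrderedRing R]

theorem det_updateRow_nonneg_of_sum_nonneg {n : Type*} [Fintype n] [DecidableEq n]
    (X : Matrix n n R) {k : n} {v : n → R}
    (hv_off : ∀ l, l ≠ k → v l ≤ 0) (hv_sum : 0 ≤ ∑ l, v l)
    (h_single : 0 ≤ (X.updateRow k (Pi.single k 1)).det)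
    (h_sub : ∀ l, l ≠ k → 0 ≤ (X.updateRow k (Pi.single k 1 - Pi.single l 1)).det) :
    0 ≤ (X.updateRow k v).det := by
  have hv : v = (∑ l, v l) • Pi.single k 1 + ∑ l, (-v l) • (Pi.single k 1 - Pi.single l 1) := by
    ext c
    simp [Pi.single_apply, mul_sub, Finset.sum_sub_distrib]
  rw [hv, det_updateRow_add, det_updateRow_smul, det_updateRow_finset_sum]
  refine add_nonneg (mul_nonneg hv_sum h_single) (Finset.sum_nonneg fun l _ => ?_)
  rw [det_updateRow_smul]
  rcases eq_or_ne l k with rfl | hlk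
  · simp [det_eq_zero_of_row_eq_zero l]
  · exact mul_nonneg (neg_nonneg.2 (hv_off l hlk)) (h_sub l hlk)

namespace IsDiagDominantZMatrix

theorem smul {n : Type*} [Fintype n] {A : Matrix n n R} (hA : A.IsDiagDominantZMatrix) {c : R}
    (hc : 0 ≤ c) : (c • A).IsDiagDominantZMatrix where
  offDiag_nonpos x y hxy := mul_nonpos_of_nonneg_of_nonpos hc (hA.offDiag_nonpos x y hxy)
  rowSum_nonneg x := by
    simpa [← Finset.mul_sum] using mul_nonneg hc (hA.rowSum_nonneg x)

variable {m : ℕ}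

theorem submatrix_succAbove {A : Matrix (Fin (m + 1)) (Fin (m + 1)) R}
    (hA : A.IsDiagDominantZMatrix) (k : Fin (m + 1)) :
    (A.submatrix k.succAbove k.succAbove).IsDiagDominantZMatrix where
  offDiag_nonpos x y hxy := hA.offDiag_nonpos _ _ (Fin.succAbove_right_injective.ne hxy)
  rowSum_nonneg x := by
    have hsum := Fin.sum_univ_succAbove (A (k.succAbove x)) k
    have hk := hA.offDiag_nonpos _ _ (Fin.succAbove_ne k x)
    have hrow := hA.rowSum_nonneg (k.succAbove x)
    simp only [submatrix_apply]
    linarith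

theorem submatrix_succAbove_updateCol_add {A : Matrix (Fin (m + 1)) (Fin (m + 1)) R}
    (hA : A.IsDiagDominantZMatrix) {k l : Fin (m + 1)} (hlk : l ≠ k) :
    ((A.updateCol l fun r => A r l + A r k).submatrix k.succAbove k.succAbove)
      |>.IsDiagDominantZMatrix where
  offDiag_nonpos x y hxy := by
    have hx := Fin.succAbove_ne k x
    have hne := Fin.succAbove_right_injective (p := k).ne hxy
    by_cases hy : k.succAbove y = l
    · subst hy
      simp only [submatrix_apply, updateCol_self]
      linarith [hA.offDiag_nonpos _ _ hne, hA.offDiag_nonpos _ _ hx]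
    · simpa [updateCol_ne hy] using hA.offDiag_nonpos _ _ hne
  rowSum_nonneg x := by
    set A' := A.updateCol l fun r => A r l + A r k
    have hrow' : A' (k.succAbove x) = A (k.succAbove x) + Pi.single l (A (k.succAbove x) k) := by
      ext c
      by_cases hc : c = l <;> simp [A', hc]
    have hsum : ∑ c, A' (k.succAbove x) c = ∑ c, A (k.succAbove x) c + A (k.succAbove x) k := by
      simp [hrow', Finset.sum_add_distrib]
    have hsum' := Fin.sum_univ_succAbove (A' (k.succAbove x)) k
    have hk : A' (k.succAbove x) k = A (k.succAbove x) k := updateCol_ne hlk.symm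
    have hrow := hA.rowSum_nonneg (k.succAbove x)
    simp only [submatrix_apply]
    linarith

theorem det_updateRow_updateRow_nonneg_of_minors
    (hminors : ∀ B : Matrix (Fin m) (Fin m) R, B.IsDiagDominantZMatrix →
      ∀ j (u : Fin m → R), 0 ≤ u → 0 ≤ (B.updateRow j u).det)
    {A : Matrix (Fin (m + 1)) (Fin (m + 1)) R} (hA : A.IsDiagDominantZMatrix)
    {j k : Fin (m + 1)} (hjk : j ≠ k) {u v : Fin (m + 1) → R} (hu : 0 ≤ u)
    (hv_off : ∀ l, l ≠ k → v l ≤ 0) (hv_sum : 0 ≤ ∑ l, v l) :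
    0 ≤ ((A.updateRow j u).updateRow k v).det := by
  obtain ⟨j, rfl⟩ := Fin.exists_succAbove_eq hjk
  refine det_updateRow_nonneg_of_sum_nonneg _ hv_off hv_sum ?_ fun l hlk => ?_
  · rw [det_updateRow_single_self,
      submatrix_updateRow_of_injective _ Fin.succAbove_right_injective]
    exact hminors _ (hA.submatrix_succAbove k) j _ fun y => hu _
  · have hcol : ((A.updateRow (k.succAbove j) u).updateCol l fun r =>
          A.updateRow (k.succAbove j) u r l + A.updateRow (k.succAbove j) u r k) =
        (A.updateCol l fun r => A r l + A r k).updateRow (k.succAbove j)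
          (Function.update u l (u l + u k)) := by
      ext r c
      by_cases hr : r = k.succAbove j <;> by_cases hc : c = l <;>
        simp [updateRow_apply, hr, hc]
    have hu' : 0 ≤ Function.update u l (u l + u k) := by
      intro c
      rcases eq_or_ne c l with rfl | hc
      · simpa using add_nonneg (hu c) (hu k)
      · simpa [hc] using hu c
    rw [det_updateRow_single_sub_single _ hlk, hcol,
      submatrix_updateRow_of_injective _ Fin.succAbove_right_injective]
    exact hminors _ (hA.submatrix_succAbove_updateCol_add hlk) j _ fun y => hu' _

theorem det_updateRow_nonneg {A : Matrix (Fin m) (Fin m) R} (hA : A.IsDiagDominantZMatrix)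
    (j : Fin m) {u : Fin m → R} (hu : 0 ≤ u) : 0 ≤ (A.updateRow j u).det := by
  induction m with
  | zero => exact j.elim0
  | succ m ih =>
    rcases m with _ | m
    · fin_cases j
      simpa [det_unique] using hu 0
    · obtain ⟨k, hkj⟩ := exists_ne j
      have hk := det_updateRow_updateRow_nonneg_of_minors (fun B hB => ih hB) hA hkj.symm hu
        (fun l hl => hA.offDiag_nonpos k l hl.symm) (hA.rowSum_nonneg k)
      rwa [← updateRow_ne (M := A) (b := u) hkj, updateRow_eq_self] at hk

theorem adjugate_le_adjugate_updateRow {A : Matrix (Fin (m + 1)) (Fin (m + 1)) R}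
    (hA : A.IsDiagDominantZMatrix) (k : Fin (m + 1)) {w : Fin (m + 1) → R}
    (hw_off : ∀ l, l ≠ k → w l ≤ A k l) (hw_sum : ∑ l, A k l ≤ ∑ l, w l) (i j : Fin (m + 1)) :
    A.adjugate i j ≤ (A.updateRow k w).adjugate i j := by
  rcases eq_or_ne j k with rfl | hjk
  · simp [adjugate_apply]
  · have hw : w = A.updateRow j (Pi.single i 1) k + (w - A k) := by
      rw [updateRow_ne hjk.symm]
      abel
    rw [adjugate_apply, adjugate_apply, updateRow_comm _ hjk.symm, hw, det_updateRow_add,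
      updateRow_eq_self, le_add_iff_nonneg_right]
    exact det_updateRow_updateRow_nonneg_of_minors (fun B hB => hB.det_updateRow_nonneg) hA hjk
      (Pi.single_nonneg.2 zero_le_one) (fun l hl => sub_nonpos.2 (hw_off l hl))
      (by simpa [Finset.sum_sub_distrib] using hw_sum)

theorem adjugate_le_adjugate {A B : Matrix (Fin m) (Fin m) R} (hA : A.IsDiagDominantZMatrix)
    (hoff : ∀ i j, i ≠ j → B i j ≤ A i j) (hrow : ∀ i, ∑ j, A i j ≤ ∑ j, B i j) (i j : Fin m) :
    A.adjugate i j ≤ B.adjugate i j := by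
  rcases m with _ | m
  · exact i.elim0
  have hB : B.IsDiagDominantZMatrix :=
    ⟨fun x y h => (hoff x y h).trans (hA.offDiag_nonpos x y h),
      fun x => (hA.rowSum_nonneg x).trans (hrow x)⟩
  let C (S : Finset (Fin (m + 1))) : Matrix (Fin (m + 1)) (Fin (m + 1)) R :=
    fun x => if x ∈ S then B x else A x
  suffices ∀ S, A.adjugate i j ≤ (C S).adjugate i j by
    simpa [C] using this Finset.univ
  intro S
  induction S using Finset.induction_on with
  | empty => simp [C]
  | insert k S hk ih =>
    have hC : C (insert k S) = (C S).updateRow k (B k) := by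
      ext x : 1
      by_cases hx : x = k
      · rw [hx, updateRow_self]
        simp [C]
      · rw [updateRow_ne hx]
        simp [C, hx]
    have hkA : C S k = A k := if_neg hk
    rw [hC]
    refine ih.trans (adjugate_le_adjugate_updateRow ?_ k ?_ ?_ i j)
    · exact hA.of_forall_row_eq_or hB fun x => by by_cases hx : x ∈ S <;> simp [C, hx]
    · exact fun l hl => hkA ▸ hoff k l hl.symm
    · exact hkA ▸ hrow k

end IsDiagDominantZMatrix

end Matrix

open Matrix

theorem mmatrix_adjugate_componentwise_bound_general
    {n : ℕ} (M Mt : Matrix (Fin n) (Fin n) ℝ) (ε : ℝ)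
    (hMoff : ∀ i j, i ≠ j → M i j ≤ 0)
    (hMtoff : ∀ i j, i ≠ j → Mt i j ≤ 0)
    (hMrow : ∀ i, 0 ≤ ∑ j, M i j) (hMtrow : ∀ i, 0 ≤ ∑ j, Mt i j)
    (hε1 : ε < 1)
    (hoff : ∀ i j, i ≠ j →
      (1 - ε) * (-(M i j)) ≤ -(Mt i j) ∧ -(Mt i j) ≤ (1 + ε) * (-(M i j)))
    (hrow : ∀ i, (1 - ε) * (∑ j, M i j) ≤ (∑ j, Mt i j) ∧
      (∑ j, Mt i j) ≤ (1 + ε) * (∑ j, M i j)) :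
    ∀ i j, (1 - ε) ^ (n - 1) * M.adjugate i j ≤ Mt.adjugate i j ∧
      Mt.adjugate i j ≤ (1 + ε) ^ (n - 1) * M.adjugate i j := by
  intro i j
  have hM : M.IsDiagDominantZMatrix := ⟨hMoff, hMrow⟩
  have hMt : Mt.IsDiagDominantZMatrix := ⟨hMtoff, hMtrow⟩
  have hsum_smul (c : ℝ) (x : Fin n) : ∑ y, (c • M) x y = c * ∑ y, M x y := by
    simp [Finset.mul_sum]
  have hlower := (hM.smul (sub_nonneg.2 hε1.le)).adjugate_le_adjugate (B := Mt)
    (fun x y h => by simp only [Matrix.smul_apply, smul_eq_mul]; linarith [(hoff x y h).1])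
    (fun x => (hsum_smul _ x).trans_le (hrow x).1) i j
  have hupper := hMt.adjugate_le_adjugate (B := (1 + ε) • M)
    (fun x y h => by simp only [Matrix.smul_apply, smul_eq_mul]; linarith [(hoff x y h).2])
    (fun x => (hrow x).2.trans_eq (hsum_smul _ x).symm) i j
  simp only [adjugate_smul, Fintype.card_fin, Matrix.smul_apply, smul_eq_mul] at hlower hupper
  exact ⟨hlower, hupper⟩

/-- Componentwise bound on the adjugate of a componentwise-perturbed nonsingular M-matrix. -/
theorem mmatrix_adjugate_componentwise_bound
    {n : ℕ} (M Mt : Matrix (Fin n) (Fin n) ℝ) (ε : ℝ)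
    (hMoff : ∀ i j, i ≠ j → M i j ≤ 0)
    (hMtoff : ∀ i j, i ≠ j → Mt i j ≤ 0)
    (hMdet : IsUnit M.det) (hMtdet : IsUnit Mt.det)
    (hMinv : ∀ i j, 0 ≤ M⁻¹ i j) (hMtinv : ∀ i j, 0 ≤ Mt⁻¹ i j)
    (hMrow : ∀ i, 0 ≤ ∑ j, M i j) (hMtrow : ∀ i, 0 ≤ ∑ j, Mt i j)
    (hε0 : 0 ≤ ε) (hε1 : ε < 1)
    (hoff : ∀ i j, i ≠ j →
      (1 - ε) * (-(M i j)) ≤ -(Mt i j) ∧ -(Mt i j) ≤ (1 + ε) * (-(M i j)))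
    (hrow : ∀ i, (1 - ε) * (∑ j, M i j) ≤ (∑ j, Mt i j) ∧
      (∑ j, Mt i j) ≤ (1 + ε) * (∑ j, M i j)) :
    ∀ i j, (1 - ε) ^ (n - 1) * M.adjugate i j ≤ Mt.adjugate i j ∧
      Mt.adjugate i j ≤ (1 + ε) ^ (n - 1) * M.adjugate i j :=
  mmatrix_adjugate_componentwise_bound_general M Mt ε hMoff hMtoff hMrow hMtrow hε1 hoff hrow
end

section
/- Let a ∈ ℝⁿ with a ≥ 0 and let B be an entrywise nonnegative n×n×n tensor. Let m be the minimal nonnegative solution of x = a + Bx², and assume R_m = I − Bm: − B:m is invertible with R_m⁻¹ entrywise nonnegative. Set y = R_m⁻¹a. Then m and y have the same zero pattern: for every index i, m_i = 0 if and only if y_i = 0. -/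
open Matrix

/-- `(tapp B x y) i = Σ_{j,k} B i j k * x j * y k`, the tensor–vector–vector product. -/
def tapp {n : ℕ} (B : Fin n → Fin n → Fin n → ℝ) (x y : Fin n → ℝ) : Fin n → ℝ :=
  fun i => ∑ j, ∑ k, B i j k * x j * y k

/-- The matrix `Bx:`, satisfying `(Bx:) h = B x h`; `(Bx:)_{ij} = Σ_k b_{ikj} x_k`. -/
def matL {n : ℕ} (B : Fin n → Fin n → Fin n → ℝ) (x : Fin n → ℝ) :
    Matrix (Fin n) (Fin n) ℝ :=
  Matrix.of fun i j => ∑ k, B i k j * x k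

/-- The matrix `B:x`, satisfying `(B:x) h = B h x`; `(B:x)_{ij} = Σ_k b_{ijk} x_k`. -/
def matR {n : ℕ} (B : Fin n → Fin n → Fin n → ℝ) (x : Fin n → ℝ) :
    Matrix (Fin n) (Fin n) ℝ :=
  Matrix.of fun i j => ∑ k, B i j k * x k

/-- `R_x = I − Bx: − B:x`, the negative Jacobian of `x ↦ a + Bx² − x`. -/
def Rmat {n : ℕ} (B : Fin n → Fin n → Fin n → ℝ) (x : Fin n → ℝ) :
    Matrix (Fin n) (Fin n) ℝ :=
  1 - matL B x - matR B x

/-!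
Because `m = a + Bm²` is a sum of nonnegative terms, `m i = 0` forces `a i = 0` and
`B i j k * m j * m k = 0`, so row `i` of `Bm: + B:m` vanishes on the support of `m`.
Inverse-positivity of `R_m` then gives both inclusions: `R_m m = a - Bm² ≤ a = R_m y` yields
`m ≤ y`, and the restriction of `y` to the zero set of `m` is mapped by `R_m` to a nonpositive
vector, so it is itself nonpositive, i.e. zero.
-/

section InversePositive

variable {ι R : Type*} [Fintype ι] [CommRing R] [PartialOrder R] [IsOrderedRing R]

theorem Matrix.mulVec_nonneg {A : Matrix ι ι R} (hA : ∀ i j, 0 ≤ A i j) {v : ι → R}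
    (hv : 0 ≤ v) : 0 ≤ A *ᵥ v :=
  fun i => Finset.sum_nonneg fun j _ => mul_nonneg (hA i j) (hv j)

theorem Matrix.mul_eq_zero_of_mulVec_apply_eq_zero {A : Matrix ι ι R} (hA : ∀ i j, 0 ≤ A i j)
    {v : ι → R} (hv : 0 ≤ v) {i : ι} (h : (A *ᵥ v) i = 0) (j : ι) : A i j * v j = 0 :=
  congrFun ((Fintype.sum_eq_zero_iff_of_nonneg fun j => mul_nonneg (hA i j) (hv j)).mp h) j

theorem Matrix.le_of_mulVec_le_mulVec [DecidableEq ι] {A : Matrix ι ι R} (hdet : IsUnit A.det)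
    (hinv : ∀ i j, 0 ≤ A⁻¹ i j) {v w : ι → R} (h : A *ᵥ v ≤ A *ᵥ w) : v ≤ w := by
  have hsub : w - v = A⁻¹ *ᵥ (A *ᵥ w - A *ᵥ v) := by
    rw [← mulVec_sub, mulVec_mulVec, nonsing_inv_mul _ hdet, one_mulVec]
  exact sub_nonneg.mp (hsub ▸ mulVec_nonneg hinv (sub_nonneg.mpr h))

theorem Matrix.one_sub_mulVec_indicator_nonpos [DecidableEq ι] {S : Matrix ι ι R}
    (hS : ∀ i j, 0 ≤ S i j) {Z : Set ι} (hZ : ∀ i ∈ Z, ∀ j ∉ Z, S i j = 0) {y : ι → R}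
    (hy : 0 ≤ y) (hSy : ∀ i ∈ Z, ((1 - S) *ᵥ y) i ≤ 0) : (1 - S) *ᵥ Z.indicator y ≤ 0 := by
  intro i
  rw [Pi.zero_apply]
  by_cases hi : i ∈ Z
  · have hSZ : (S *ᵥ Z.indicator y) i = (S *ᵥ y) i := Finset.sum_congr rfl fun j _ => by
      by_cases hj : j ∈ Z
      · rw [Set.indicator_of_mem hj]
      · simp only [hZ i hi j hj, zero_mul]
    simpa only [sub_mulVec, one_mulVec, Pi.sub_apply, hSZ, Set.indicator_of_mem hi] using hSy i hi
  · rw [sub_mulVec, one_mulVec, Pi.sub_apply, Set.indicator_of_notMem hi, zero_sub, neg_nonpos]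
    exact mulVec_nonneg hS (Set.indicator_nonneg fun j _ => hy j) i

end InversePositive

section Tensor

variable {n : ℕ} {B : Fin n → Fin n → Fin n → ℝ}

theorem tapp_nonneg (hB : ∀ i j k, 0 ≤ B i j k) {x y : Fin n → ℝ} (hx : 0 ≤ x) (hy : 0 ≤ y) :
    0 ≤ tapp B x y :=
  fun i => Finset.sum_nonneg fun j _ => Finset.sum_nonneg fun k _ =>
    mul_nonneg (mul_nonneg (hB i j k) (hx j)) (hy k)

theorem matL_mulVec (x h : Fin n → ℝ) : matL B x *ᵥ h = tapp B x h := by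
  ext i
  simp only [matL, tapp, mulVec, dotProduct, of_apply, Finset.sum_mul]
  rw [Finset.sum_comm]

theorem matR_mulVec (x h : Fin n → ℝ) : matR B x *ᵥ h = tapp B h x := by
  ext i
  simp only [matR, tapp, mulVec, dotProduct, of_apply, Finset.sum_mul]
  exact Finset.sum_congr rfl fun j _ => Finset.sum_congr rfl fun k _ => by ring

theorem Rmat_eq_one_sub (x : Fin n → ℝ) : Rmat B x = 1 - (matL B x + matR B x) :=
  sub_sub _ _ _

theorem matL_add_matR_nonneg (hB : ∀ i j k, 0 ≤ B i j k) {x : Fin n → ℝ} (hx : 0 ≤ x)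
    (i j : Fin n) : 0 ≤ (matL B x + matR B x) i j := by
  simp only [Matrix.add_apply, matL, matR, of_apply]
  exact add_nonneg (Finset.sum_nonneg fun k _ => mul_nonneg (hB i k j) (hx k))
    (Finset.sum_nonneg fun k _ => mul_nonneg (hB i j k) (hx k))

end Tensor

section Solution

variable {n : ℕ} {a : Fin n → ℝ} {B : Fin n → Fin n → Fin n → ℝ} {m : Fin n → ℝ}

theorem Rmat_mulVec_self_le (hB : ∀ i j k, 0 ≤ B i j k) (hm : 0 ≤ m)
    (hmsol : m = a + tapp B m m) : Rmat B m *ᵥ m ≤ a := by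
  have hRm : Rmat B m *ᵥ m = a - tapp B m m := by
    rw [Rmat, sub_mulVec, sub_mulVec, one_mulVec, matL_mulVec, matR_mulVec]
    nth_rw 1 [hmsol]
    abel
  rw [hRm]
  exact sub_le_self _ (tapp_nonneg hB hm hm)

theorem apply_eq_zero_and_tapp_apply_eq_zero (ha : 0 ≤ a) (hB : ∀ i j k, 0 ≤ B i j k)
    (hm : 0 ≤ m) (hmsol : m = a + tapp B m m) {i : Fin n} (hi : m i = 0) :
    a i = 0 ∧ tapp B m m i = 0 :=
  (add_eq_zero_iff_of_nonneg (ha i) (tapp_nonneg hB hm hm i)).mp (hi ▸ congrFun hmsol i).symm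

theorem matL_add_matR_apply_eq_zero (ha : 0 ≤ a) (hB : ∀ i j k, 0 ≤ B i j k) (hm : 0 ≤ m)
    (hmsol : m = a + tapp B m m) {i p : Fin n} (hi : m i = 0) (hp : m p ≠ 0) :
    (matL B m + matR B m) i p = 0 := by
  have hBmm := (apply_eq_zero_and_tapp_apply_eq_zero ha hB hm hmsol hi).2
  have hSm : ((matL B m + matR B m) *ᵥ m) i = 0 := by
    rw [add_mulVec, matL_mulVec, matR_mulVec, Pi.add_apply, hBmm, add_zero]
  exact (mul_eq_zero.mp (mul_eq_zero_of_mulVec_apply_eq_zero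
    (matL_add_matR_nonneg hB hm) hm hSm p)).resolve_right hp

end Solution

theorem zero_pattern_of_minimal_and_y_general
    {n : ℕ} (a : Fin n → ℝ) (B : Fin n → Fin n → Fin n → ℝ)
    (ha : ∀ i, 0 ≤ a i) (hB : ∀ i j k, 0 ≤ B i j k)
    (m : Fin n → ℝ)
    (hm0 : ∀ i, 0 ≤ m i)
    (hmsol : m = a + tapp B m m)
    (hdet : IsUnit (Rmat B m).det)
    (hinv : ∀ i j, 0 ≤ (Rmat B m)⁻¹ i j)
    (y : Fin n → ℝ) (hy : y = (Rmat B m)⁻¹ *ᵥ a) :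
    ∀ i, m i = 0 ↔ y i = 0 := by
  have hm : 0 ≤ m := hm0
  have hRy : Rmat B m *ᵥ y = a := by
    rw [hy, mulVec_mulVec, mul_nonsing_inv _ hdet, one_mulVec]
  have hmy : m ≤ y :=
    le_of_mulVec_le_mulVec hdet hinv ((Rmat_mulVec_self_le hB hm hmsol).trans hRy.ge)
  have hyZ : {j | m j = 0}.indicator y ≤ 0 := by
    refine le_of_mulVec_le_mulVec hdet hinv ?_
    rw [mulVec_zero, Rmat_eq_one_sub]
    refine one_sub_mulVec_indicator_nonpos (matL_add_matR_nonneg hB hm)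
      (fun i hi j hj => matL_add_matR_apply_eq_zero ha hB hm hmsol hi hj) (hm.trans hmy)
      fun i hi => ?_
    rw [← Rmat_eq_one_sub, hRy]
    exact (apply_eq_zero_and_tapp_apply_eq_zero ha hB hm hmsol hi).1.le
  intro i
  refine ⟨fun hi => le_antisymm ?_ (hm.trans hmy i), fun hi => le_antisymm (hi ▸ hmy i) (hm i)⟩
  have hyi := hyZ i
  rwa [Set.indicator_of_mem (show i ∈ {j | m j = 0} from hi), Pi.zero_apply] at hyi

/-- The minimal solution `m` of `x = a + Bx²` and `y = R_m⁻¹ a` have the same zero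
pattern (Theorem `thm0` in the paper). -/
theorem zero_pattern_of_minimal_and_y
    {n : ℕ} (a : Fin n → ℝ) (B : Fin n → Fin n → Fin n → ℝ)
    (ha : ∀ i, 0 ≤ a i) (hB : ∀ i j k, 0 ≤ B i j k)
    (m : Fin n → ℝ)
    (hm0 : ∀ i, 0 ≤ m i)
    (hmsol : m = a + tapp B m m)
    (hmin : ∀ x : Fin n → ℝ, (∀ i, 0 ≤ x i) → x = a + tapp B x x → ∀ i, m i ≤ x i)
    (hdet : IsUnit (Rmat B m).det)
    (hinv : ∀ i j, 0 ≤ (Rmat B m)⁻¹ i j)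
    (y : Fin n → ℝ) (hy : y = (Rmat B m)⁻¹ *ᵥ a) :
    ∀ i, m i = 0 ↔ y i = 0 :=
  zero_pattern_of_minimal_and_y_general a B ha hB m hm0 hmsol hdet hinv y hy
end

section
/- Consider the multilinear PageRank equation x = (1−α)v + αPx² with α ∈ (0,1), v stochastic and P a stochastic n×n×n tensor, and let R_x = I − αP x: − αP:x. Then: (i) for every x ∈ ℝⁿ, 𝟏ᵀR_x = (1 − 2α(𝟏ᵀx))·𝟏ᵀ; (ii) if (x_k) is the Newton sequence defined by x_0 = 0 and x_{k+1} = x_k + R_{x_k}⁻¹((1−α)v + αPx_k² − x_k), where each R_{x_k} is invertible and z_k := 1 − 2α(𝟏ᵀx_k) ≠ 0, then z_0 = 1 and z_{k+1} = ((1−2α)² + z_k²)/(2z_k) for all k ≥ 0. -/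
open Matrix

/-! Since `P` is column stochastic, every column of `R_x` sums to `z = 1 - 2α 𝟏ᵀx`, i.e.
`𝟏ᵀ R_x = z 𝟏ᵀ`, hence `z 𝟏ᵀ R_x⁻¹ = 𝟏ᵀ`. Applying `𝟏ᵀ` to the Newton step therefore turns it
into a scalar recurrence for `s_k = 𝟏ᵀx_k`, using `𝟏ᵀv = 1` and `𝟏ᵀ P x² = (𝟏ᵀx)²`; rewritten
in terms of `z_k` it is the stated one. -/

theorem Matrix.mul_sum_inv_mulVec_of_colSum_eq {ι K : Type*} [Fintype ι] [DecidableEq ι]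
    [Field K] (M : Matrix ι ι K) (hM : IsUnit M.det) {z : K} (hcol : ∀ j, ∑ i, M i j = z)
    (w : ι → K) : z * ∑ i, (M⁻¹ *ᵥ w) i = ∑ i, w i := by
  have hrow : 1 ᵥ* M = z • 1 := by
    ext j
    simp [vecMul, dotProduct, hcol]
  calc z * ∑ i, (M⁻¹ *ᵥ w) i = (z • 1) ⬝ᵥ (M⁻¹ *ᵥ w) := by simp [dotProduct, Finset.mul_sum]
    _ = 1 ⬝ᵥ (M * M⁻¹) *ᵥ w := by rw [← hrow, dotProduct_mulVec, vecMul_vecMul, ← dotProduct_mulVec]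
    _ = ∑ i, w i := by simp [mul_nonsing_inv _ hM, dotProduct]

section ColumnSums

variable {n : ℕ} {B : Fin n → Fin n → Fin n → ℝ} {α : ℝ} (hB : ∀ j k, ∑ i, B i j k = α)
include hB

theorem sum_matL_apply (x : Fin n → ℝ) (j : Fin n) : ∑ i, matL B x i j = α * ∑ k, x k := by
  simp only [matL, of_apply]
  rw [Finset.sum_comm, Finset.mul_sum]
  simp [← Finset.sum_mul, hB]

theorem sum_matR_apply (x : Fin n → ℝ) (j : Fin n) : ∑ i, matR B x i j = α * ∑ k, x k := by
  simp only [matR, of_apply]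
  rw [Finset.sum_comm, Finset.mul_sum]
  simp [← Finset.sum_mul, hB]

theorem sum_Rmat_apply (x : Fin n → ℝ) (j : Fin n) :
    ∑ i, Rmat B x i j = 1 - 2 * α * ∑ i, x i := by
  simp only [Rmat, Matrix.sub_apply, Finset.sum_sub_distrib, sum_matL_apply hB, sum_matR_apply hB,
    one_apply, Finset.sum_ite_eq', Finset.mem_univ, ↓reduceIte]
  ring

theorem sum_tapp (x y : Fin n → ℝ) : ∑ i, tapp B x y i = α * (∑ j, x j) * ∑ k, y k := by
  calc ∑ i, tapp B x y i = ∑ j, ∑ k, (∑ i, B i j k) * x j * y k := by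
        simp only [tapp, Finset.sum_mul]
        rw [Finset.sum_comm]
        exact Finset.sum_congr rfl fun j _ => Finset.sum_comm
    _ = α * (∑ j, x j) * ∑ k, y k := by
        rw [mul_assoc, Finset.sum_mul_sum, Finset.mul_sum]
        simp only [hB, Finset.mul_sum, mul_assoc]

theorem newton_step_one_sub_two_mul_sum {a : Fin n → ℝ} (ha : ∑ i, a i = 1 - α)
    (x : Fin n → ℝ) (hR : IsUnit (Rmat B x).det) (hz : 1 - 2 * α * ∑ i, x i ≠ 0) :
    1 - 2 * α * ∑ i, (x + (Rmat B x)⁻¹ *ᵥ (a + tapp B x x - x)) i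
      = ((1 - 2 * α) ^ 2 + (1 - 2 * α * ∑ i, x i) ^ 2) / (2 * (1 - 2 * α * ∑ i, x i)) := by
  have hstep := (Rmat B x).mul_sum_inv_mulVec_of_colSum_eq hR (sum_Rmat_apply hB x)
    (a + tapp B x x - x)
  simp only [Pi.add_apply, Pi.sub_apply, Finset.sum_add_distrib, Finset.sum_sub_distrib, ha,
    sum_tapp hB] at hstep ⊢
  -- with `s = 𝟏ᵀx` and `z = 1 - 2αs`: `4α(1 - α + αs² - s) = z² - (1 - 2α)²`
  field_simp
  linear_combination (-4 * α) * hstep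

end ColumnSums

theorem pagerank_newton_triplet_general
    {n : ℕ} (α : ℝ)
    (v : Fin n → ℝ) (hv1 : ∑ i, v i = 1)
    (P : Fin n → Fin n → Fin n → ℝ)
    (hP1 : ∀ j k, ∑ i, P i j k = 1)
    (B : Fin n → Fin n → Fin n → ℝ) (hBdef : B = fun i j k => α * P i j k) :
    (∀ x : Fin n → ℝ, ∀ j, (∑ i, Rmat B x i j) = 1 - 2 * α * (∑ i, x i)) ∧
    (∀ x : ℕ → (Fin n → ℝ), x 0 = 0 →
      (∀ k, IsUnit (Rmat B (x k)).det) →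
      (∀ k, x (k + 1) =
        x k + (Rmat B (x k))⁻¹ *ᵥ ((fun i => (1 - α) * v i) + tapp B (x k) (x k) - x k)) →
      ∀ z : ℕ → ℝ, (∀ k, z k = 1 - 2 * α * (∑ i, x k i)) → (∀ k, z k ≠ 0) →
        z 0 = 1 ∧ ∀ k, z (k + 1) = ((1 - 2 * α) ^ 2 + (z k) ^ 2) / (2 * z k)) := by
  have hB : ∀ j k, ∑ i, B i j k = α := by simp [hBdef, ← Finset.mul_sum, hP1]
  have ha : ∑ i, (1 - α) * v i = 1 - α := by rw [← Finset.mul_sum, hv1, mul_one]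
  refine ⟨sum_Rmat_apply hB, fun x hx0 hR hx z hz hz0 => ⟨by simp [hz, hx0], fun k => ?_⟩⟩
  rw [hz, hz, hx]
  exact newton_step_one_sub_two_mul_sum hB ha (x k) (hR k) (hz k ▸ hz0 k)

/-- Triplet representation for the Newton iteration on multilinear PageRank
(Theorem `thmz` in the paper): `𝟏ᵀ R_x = (1 − 2α 𝟏ᵀx) 𝟏ᵀ`, and the scalars
`z_k = 1 − 2α(𝟏ᵀ x_k)` satisfy `z_0 = 1` and
`z_{k+1} = ((1−2α)² + z_k²)/(2 z_k)`. -/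
theorem pagerank_newton_triplet
    {n : ℕ} (α : ℝ) (hα0 : 0 < α) (hα1 : α < 1)
    (v : Fin n → ℝ) (hv0 : ∀ i, 0 ≤ v i) (hv1 : ∑ i, v i = 1)
    (P : Fin n → Fin n → Fin n → ℝ)
    (hP0 : ∀ i j k, 0 ≤ P i j k) (hP1 : ∀ j k, ∑ i, P i j k = 1)
    (B : Fin n → Fin n → Fin n → ℝ) (hBdef : B = fun i j k => α * P i j k) :
    (∀ x : Fin n → ℝ, ∀ j, (∑ i, Rmat B x i j) = 1 - 2 * α * (∑ i, x i)) ∧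
    (∀ x : ℕ → (Fin n → ℝ), x 0 = 0 →
      (∀ k, IsUnit (Rmat B (x k)).det) →
      (∀ k, x (k + 1) =
        x k + (Rmat B (x k))⁻¹ *ᵥ ((fun i => (1 - α) * v i) + tapp B (x k) (x k) - x k)) →
      ∀ z : ℕ → ℝ, (∀ k, z k = 1 - 2 * α * (∑ i, x k i)) → (∀ k, z k ≠ 0) →
        z 0 = 1 ∧ ∀ k, z (k + 1) = ((1 - 2 * α) ^ 2 + (z k) ^ 2) / (2 * z k)) :=
  pagerank_newton_triplet_general α v hv1 P hP1 B hBdef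
end
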